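/- arXiv:2306.07277 — 2 statements merged into one kernel-verified Lean document; each statement's English description precedes it below -/
import Mathlib

section
/- J₁ is a maximal freely-acting subgroup: there is no subgroup Ĝ with J₁ ⊊ Ĝ ⊆ G such that Ĝ acts freely on the conjecture space C. -/
lemma Binv_eq : (!![(1:ℝ), 1; -1, 1])⁻¹ = !![1/2, -1/2; 1/2, 1/2] := by
  rw [Matrix.inv_def]
  norm_num [Matrix.adjugate_fin_two, Matrix.det_fin_two_of]

lemma matform (a c b : ℝ) : (!![(1:ℝ), 1; -1, 1])⁻¹ * !![a, c; 0, b] * !![(1:ℝ), 1; -1, 1]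
    = !![(a-c+b)/2, (a+c-b)/2; (a-c-b)/2, (a+c+b)/2] := by
  rw [Binv_eq]
  ext i j
  fin_cases i <;> fin_cases j <;> simp [Matrix.mul_apply, Fin.sum_univ_two] <;> ring

def act {X : Type*} [TopologicalSpace X] (A : Matrix (Fin 2) (Fin 2) ℝ)
    (p : C(X, ℝ) × C(X, ℝ)) : C(X, ℝ) × C(X, ℝ) :=
  (A 0 0 • p.1 + A 0 1 • p.2, A 1 0 • p.1 + A 1 1 • p.2)

def Gset : Set (Matrix (Fin 2) (Fin 2) ℝ) :=
  {A | ∃ a b c : ℝ, a ≠ 0 ∧ 0 < b ∧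
    A = (!![(1:ℝ), 1; -1, 1])⁻¹ * !![a, c; 0, b] * !![(1:ℝ), 1; -1, 1]}

def J1set : Set (Matrix (Fin 2) (Fin 2) ℝ) :=
  {A | ∃ b c : ℝ, 0 < b ∧
    A = (!![(1:ℝ), 1; -1, 1])⁻¹ * !![b, c; 0, b] * !![(1:ℝ), 1; -1, 1]}

theorem J1_maximal_freely_acting (n : ℕ) (D : Set (EuclideanSpace ℝ (Fin n)))
    (hD : IsCompact D) [Nonempty D] :
    ¬ ∃ Ghat : Subgroup (GL (Fin 2) ℝ),
      (∀ A : GL (Fin 2) ℝ, (A : Matrix (Fin 2) (Fin 2) ℝ) ∈ J1set → A ∈ Ghat) ∧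
      (∀ A : GL (Fin 2) ℝ, A ∈ Ghat → (A : Matrix (Fin 2) (Fin 2) ℝ) ∈ Gset) ∧
      ((Ghat : Set (GL (Fin 2) ℝ)) ≠
        {A : GL (Fin 2) ℝ | (A : Matrix (Fin 2) (Fin 2) ℝ) ∈ J1set}) ∧
      (∀ A : GL (Fin 2) ℝ, A ∈ Ghat →
        (∃ f g : C(D, ℝ), (∀ x : D, f x < g x) ∧
          act (A : Matrix (Fin 2) (Fin 2) ℝ) (f, g) = (f, g)) → A = 1) := by
  rintro ⟨Ghat, hJ1, hG, hne, hfree⟩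
  -- obtain A ∈ Ghat \ J1
  obtain ⟨A, hAG, hAJ⟩ : ∃ A : GL (Fin 2) ℝ, A ∈ Ghat ∧ (A : Matrix (Fin 2) (Fin 2) ℝ) ∉ J1set := by
    by_contra h
    push_neg at h
    exact hne (Set.eq_of_subset_of_subset (fun A hA => h A hA) (fun A hA => hJ1 A hA))
  obtain ⟨a, b, c, ha, hb, hA⟩ := hG A hAG
  have hab : a ≠ b := fun h => hAJ ⟨b, c, hb, by rw [hA, h]⟩
  have hb0 : b ≠ 0 := ne_of_gt hb
  -- the element P with matrix b⁻¹ • 1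
  have hinv1 : (b⁻¹ • (1 : Matrix (Fin 2) (Fin 2) ℝ)) * (b • 1) = 1 := by
    rw [Matrix.smul_mul, Matrix.mul_smul, smul_smul, one_mul, inv_mul_cancel₀ hb0, one_smul]
  have hinv2 : (b • (1 : Matrix (Fin 2) (Fin 2) ℝ)) * (b⁻¹ • 1) = 1 := by
    rw [Matrix.smul_mul, Matrix.mul_smul, smul_smul, one_mul, mul_inv_cancel₀ hb0, one_smul]
  set P : GL (Fin 2) ℝ := ⟨b⁻¹ • 1, b • 1, hinv1, hinv2⟩ with hP
  have hPJ : (P : Matrix (Fin 2) (Fin 2) ℝ) ∈ J1set := by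
    refine ⟨b⁻¹, 0, by positivity, ?_⟩
    rw [matform]
    show b⁻¹ • (1 : Matrix (Fin 2) (Fin 2) ℝ) = _
    ext i j
    fin_cases i <;> fin_cases j <;>
      simp [Matrix.one_apply] <;> ring
  have hQG : A * P ∈ Ghat := Ghat.mul_mem hAG (hJ1 P hPJ)
  -- explicit form of (A * P)
  set a' : ℝ := a / b with ha'
  set c' : ℝ := c / b with hc'
  have hQval : ((A * P : GL (Fin 2) ℝ) : Matrix (Fin 2) (Fin 2) ℝ)
      = !![(a'-c'+1)/2, (a'+c'-1)/2; (a'-c'-1)/2, (a'+c'+1)/2] := by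
    show (A : Matrix (Fin 2) (Fin 2) ℝ) * (b⁻¹ • 1) = _
    rw [hA, matform, Matrix.mul_smul, Matrix.mul_one]
    ext i j
    fin_cases i <;> fin_cases j <;>
      simp [ha', hc'] <;> field_simp <;> ring
  have ha1 : a' ≠ 1 := by
    rw [ha']
    intro h
    exact hab (by field_simp at h; linarith)
  have ha1' : a' - 1 ≠ 0 := sub_ne_zero.mpr ha1
  -- the fixed point
  set s : ℝ := -c' / (a' - 1) with hs
  have hseq : a' * s + c' = s := by
    rw [hs, mul_div_assoc', div_add' _ _ _ ha1']
    congr 1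
    ring
  set u : ℝ := (s - 1) / 2 with hu
  set v : ℝ := (s + 1) / 2 with hv
  have huv : u < v := by rw [hu, hv]; linarith
  set f : C(D, ℝ) := ContinuousMap.const D u with hf
  set g : C(D, ℝ) := ContinuousMap.const D v with hg
  have hfix : act ((A * P : GL (Fin 2) ℝ) : Matrix (Fin 2) (Fin 2) ℝ) (f, g) = (f, g) := by
    rw [hQval]
    unfold act
    refine Prod.ext ?_ ?_ <;> · ext x; simp [hf, hg, smul_eq_mul]; linear_combination hseq / 2
  have hone : A * P = 1 := hfree (A * P) hQG ⟨f, g, fun x => huv, hfix⟩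
  -- contradiction
  rw [hone] at hQval
  have h01 := congrFun (congrFun ((Units.val_one (α := Matrix (Fin 2) (Fin 2) ℝ)) ▸ hQval) 0) 1
  have h10 := congrFun (congrFun ((Units.val_one (α := Matrix (Fin 2) (Fin 2) ℝ)) ▸ hQval) 1) 0
  simp [Matrix.one_apply] at h01 h10
  apply ha1
  linarith
end

section
/- Each of the subgroups T = {λI : λ>0}, H = {[[p,q-1],[p-1,q]] : p+q≠1}, G = {B⁻¹[[a,c],[0,b]]B : a≠0, b>0}, J₁ = {B⁻¹[[b,c],[0,b]]B : b>0}, and J₂ = {B⁻¹[[1/2,c],[0,b]]B : b>0} is a closed subset of GL(2,ℝ) (in the subspace topology of 2×2 real matrices). -/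
def Tset : Set (Matrix (Fin 2) (Fin 2) ℝ) :=
  {A | ∃ l : ℝ, 0 < l ∧ A = l • (1 : Matrix (Fin 2) (Fin 2) ℝ)}

def Hset : Set (Matrix (Fin 2) (Fin 2) ℝ) :=
  {A | ∃ p q : ℝ, p + q ≠ 1 ∧ A = !![p, q - 1; p - 1, q]}

def J2set : Set (Matrix (Fin 2) (Fin 2) ℝ) :=
  {A | ∃ b c : ℝ, 0 < b ∧
    A = (!![(1:ℝ), 1; -1, 1])⁻¹ * !![(1:ℝ)/2, c; 0, b] * !![(1:ℝ), 1; -1, 1]}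

def ClosedInGL (S : Set (Matrix (Fin 2) (Fin 2) ℝ)) : Prop :=
  ∀ (s : ℕ → Matrix (Fin 2) (Fin 2) ℝ) (M : Matrix (Fin 2) (Fin 2) ℝ),
    (∀ i, s i ∈ S) → Filter.Tendsto s Filter.atTop (nhds M) → IsUnit M → M ∈ S

open Filter Matrix

lemma entry_tendsto {s : ℕ → Matrix (Fin 2) (Fin 2) ℝ} {M : Matrix (Fin 2) (Fin 2) ℝ}
    (h : Tendsto s atTop (nhds M)) (j k : Fin 2) :
    Tendsto (fun i => s i j k) atTop (nhds (M j k)) :=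
  tendsto_pi_nhds.mp (tendsto_pi_nhds.mp h j) k

lemma Bdet : (!![(1:ℝ), 1; -1, 1]).det = 2 := by
  simp [Matrix.det_fin_two_of]; norm_num

lemma BdetUnit : IsUnit (!![(1:ℝ), 1; -1, 1]).det := by
  rw [Bdet]; exact isUnit_iff_ne_zero.mpr two_ne_zero

lemma conjA (X : Matrix (Fin 2) (Fin 2) ℝ) :
    !![(1:ℝ), 1; -1, 1] * ((!![(1:ℝ), 1; -1, 1])⁻¹ * X * !![(1:ℝ), 1; -1, 1]) * (!![(1:ℝ), 1; -1, 1])⁻¹ = X := by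
  have h1 := Matrix.mul_nonsing_inv _ BdetUnit
  calc !![(1:ℝ), 1; -1, 1] * ((!![(1:ℝ), 1; -1, 1])⁻¹ * X * !![(1:ℝ), 1; -1, 1]) * (!![(1:ℝ), 1; -1, 1])⁻¹
      = (!![(1:ℝ), 1; -1, 1] * (!![(1:ℝ), 1; -1, 1])⁻¹) * X * (!![(1:ℝ), 1; -1, 1] * (!![(1:ℝ), 1; -1, 1])⁻¹) := by
        simp only [Matrix.mul_assoc]
    _ = X := by rw [h1]; simp

lemma conjB (X : Matrix (Fin 2) (Fin 2) ℝ) :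
    (!![(1:ℝ), 1; -1, 1])⁻¹ * (!![(1:ℝ), 1; -1, 1] * X * (!![(1:ℝ), 1; -1, 1])⁻¹) * !![(1:ℝ), 1; -1, 1] = X := by
  have h2 := Matrix.nonsing_inv_mul _ BdetUnit
  calc (!![(1:ℝ), 1; -1, 1])⁻¹ * (!![(1:ℝ), 1; -1, 1] * X * (!![(1:ℝ), 1; -1, 1])⁻¹) * !![(1:ℝ), 1; -1, 1]
      = ((!![(1:ℝ), 1; -1, 1])⁻¹ * !![(1:ℝ), 1; -1, 1]) * X * ((!![(1:ℝ), 1; -1, 1])⁻¹ * !![(1:ℝ), 1; -1, 1]) := by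
        simp only [Matrix.mul_assoc]
    _ = X := by rw [h2]; simp

lemma tri_limit {u : ℕ → Matrix (Fin 2) (Fin 2) ℝ} {N : Matrix (Fin 2) (Fin 2) ℝ}
    (h : Tendsto u atTop (nhds N)) (hN : N.det ≠ 0)
    (h10 : ∀ i, u i 1 0 = 0) (h11 : ∀ i, 0 < u i 1 1) :
    N 1 0 = 0 ∧ N 0 0 ≠ 0 ∧ 0 < N 1 1 := by
  have e10 : N 1 0 = 0 := by
    have h1 := entry_tendsto h 1 0
    have h2 : Tendsto (fun i => u i 1 0) atTop (nhds 0) := by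
      simp [funext h10]
    exact tendsto_nhds_unique h1 h2
  have e11 : 0 ≤ N 1 1 := ge_of_tendsto' (entry_tendsto h 1 1) (fun i => (h11 i).le)
  have hdet : N.det = N 0 0 * N 1 1 := by
    rw [Matrix.det_fin_two, e10]; ring
  rw [hdet] at hN
  exact ⟨e10, left_ne_zero_of_mul hN, lt_of_le_of_ne e11 (Ne.symm (right_ne_zero_of_mul hN))⟩

theorem subgroups_closed_in_GL :
    ClosedInGL Tset ∧ ClosedInGL Hset ∧ ClosedInGL Gset ∧
    ClosedInGL J1set ∧ ClosedInGL J2set := by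
  have hBU : IsUnit (!![(1:ℝ), 1; -1, 1]) := (Matrix.isUnit_iff_isUnit_det _).mpr BdetUnit
  have hBiU : IsUnit ((!![(1:ℝ), 1; -1, 1])⁻¹) :=
    Matrix.isUnit_nonsing_inv_iff.mpr hBU
  refine ⟨?_, ?_, ?_, ?_, ?_⟩
  · -- Tset
    intro s M hs hlim hM
    have hdet := ((Matrix.isUnit_iff_isUnit_det M).mp hM).ne_zero
    have h01 : ∀ i, s i 0 1 = 0 := fun i => by
      obtain ⟨l, _, he⟩ := hs i; rw [he]; simp [Matrix.one_apply]
    have h10 : ∀ i, s i 1 0 = 0 := fun i => by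
      obtain ⟨l, _, he⟩ := hs i; rw [he]; simp [Matrix.one_apply]
    have heq : ∀ i, s i 0 0 = s i 1 1 := fun i => by
      obtain ⟨l, _, he⟩ := hs i; rw [he]; simp [Matrix.one_apply]
    have hpos : ∀ i, 0 < s i 0 0 := fun i => by
      obtain ⟨l, hl, he⟩ := hs i; rw [he]; simpa [Matrix.one_apply] using hl
    have e01 : M 0 1 = 0 := by
      refine tendsto_nhds_unique (entry_tendsto hlim 0 1) ?_
      simp [funext h01]
    have e10 : M 1 0 = 0 := by
      refine tendsto_nhds_unique (entry_tendsto hlim 1 0) ?_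
      simp [funext h10]
    have eeq : M 0 0 = M 1 1 := by
      refine tendsto_nhds_unique (entry_tendsto hlim 0 0) ?_
      rw [show (fun i => s i 0 0) = fun i => s i 1 1 from funext heq]
      exact entry_tendsto hlim 1 1
    have e0 : 0 ≤ M 0 0 := ge_of_tendsto' (entry_tendsto hlim 0 0) (fun i => (hpos i).le)
    have hdet2 : M.det = M 0 0 * M 0 0 := by
      rw [Matrix.det_fin_two, e01, e10, eeq]; ring
    rw [hdet2] at hdet
    have hne : M 0 0 ≠ 0 := left_ne_zero_of_mul hdet
    refine ⟨M 0 0, lt_of_le_of_ne e0 (Ne.symm hne), ?_⟩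
    ext i j
    fin_cases i <;> fin_cases j <;>
      simp [Matrix.one_apply, e01, e10, ← eeq]
  · -- Hset
    intro s M hs hlim hM
    have hdet := ((Matrix.isUnit_iff_isUnit_det M).mp hM).ne_zero
    have h1 : ∀ i, s i 1 0 = s i 0 0 - 1 := fun i => by
      obtain ⟨p, q, _, he⟩ := hs i; rw [he]; simp
    have h2 : ∀ i, s i 0 1 = s i 1 1 - 1 := fun i => by
      obtain ⟨p, q, _, he⟩ := hs i; rw [he]; simp
    have e1 : M 1 0 = M 0 0 - 1 := by
      refine tendsto_nhds_unique (entry_tendsto hlim 1 0) ?_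
      rw [show (fun i => s i 1 0) = fun i => s i 0 0 - 1 from funext h1]
      exact (entry_tendsto hlim 0 0).sub tendsto_const_nhds
    have e2 : M 0 1 = M 1 1 - 1 := by
      refine tendsto_nhds_unique (entry_tendsto hlim 0 1) ?_
      rw [show (fun i => s i 0 1) = fun i => s i 1 1 - 1 from funext h2]
      exact (entry_tendsto hlim 1 1).sub tendsto_const_nhds
    have hdet2 : M.det = M 0 0 + M 1 1 - 1 := by
      rw [Matrix.det_fin_two, e1, e2]; ring
    refine ⟨M 0 0, M 1 1, ?_, ?_⟩
    · intro hc
      apply hdet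
      rw [hdet2, hc]; ring
    · conv_lhs => rw [Matrix.eta_fin_two M]
      rw [e1, e2]
  · -- Gset
    intro s M hs hlim hM
    set B : Matrix (Fin 2) (Fin 2) ℝ := !![(1:ℝ), 1; -1, 1] with hB
    set u : ℕ → Matrix (Fin 2) (Fin 2) ℝ := fun i => B * s i * B⁻¹ with husdef
    set N : Matrix (Fin 2) (Fin 2) ℝ := B * M * B⁻¹ with hN
    have hu : Tendsto u atTop (nhds N) := (tendsto_const_nhds.mul hlim).mul tendsto_const_nhds
    have hui : ∀ i, ∃ a b c : ℝ, a ≠ 0 ∧ 0 < b ∧ u i = !![a, c; 0, b] := fun i => by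
      obtain ⟨a, b, c, ha, hb, he⟩ := hs i
      exact ⟨a, b, c, ha, hb, by rw [husdef]; dsimp only; rw [he, hB, conjA]⟩
    have h10 : ∀ i, u i 1 0 = 0 := fun i => by
      obtain ⟨a, b, c, _, _, he⟩ := hui i; rw [he]; simp
    have h11 : ∀ i, 0 < u i 1 1 := fun i => by
      obtain ⟨a, b, c, _, hb, he⟩ := hui i; rw [he]; simpa using hb
    have hNdet : N.det ≠ 0 :=
      ((Matrix.isUnit_iff_isUnit_det _).mp ((hBU.mul hM).mul hBiU)).ne_zero
    obtain ⟨e10, ha, hb⟩ := tri_limit hu hNdet h10 h11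
    refine ⟨N 0 0, N 1 1, N 0 1, ha, hb, ?_⟩
    have hNe : !![N 0 0, N 0 1; 0, N 1 1] = N := by
      rw [← e10]; exact (Matrix.eta_fin_two N).symm
    rw [hNe, hN, conjB]
  · -- J1set
    intro s M hs hlim hM
    set B : Matrix (Fin 2) (Fin 2) ℝ := !![(1:ℝ), 1; -1, 1] with hB
    set u : ℕ → Matrix (Fin 2) (Fin 2) ℝ := fun i => B * s i * B⁻¹ with husdef
    set N : Matrix (Fin 2) (Fin 2) ℝ := B * M * B⁻¹ with hN
    have hu : Tendsto u atTop (nhds N) := (tendsto_const_nhds.mul hlim).mul tendsto_const_nhds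
    have hui : ∀ i, ∃ b c : ℝ, 0 < b ∧ u i = !![b, c; 0, b] := fun i => by
      obtain ⟨b, c, hb, he⟩ := hs i
      exact ⟨b, c, hb, by rw [husdef]; dsimp only; rw [he, hB, conjA]⟩
    have h10 : ∀ i, u i 1 0 = 0 := fun i => by
      obtain ⟨b, c, _, he⟩ := hui i; rw [he]; simp
    have h11 : ∀ i, 0 < u i 1 1 := fun i => by
      obtain ⟨b, c, hb, he⟩ := hui i; rw [he]; simpa using hb
    have heq : ∀ i, u i 0 0 = u i 1 1 := fun i => by
      obtain ⟨b, c, _, he⟩ := hui i; rw [he]; simp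
    have hNdet : N.det ≠ 0 :=
      ((Matrix.isUnit_iff_isUnit_det _).mp ((hBU.mul hM).mul hBiU)).ne_zero
    obtain ⟨e10, _, hb⟩ := tri_limit hu hNdet h10 h11
    have eeq : N 0 0 = N 1 1 := by
      refine tendsto_nhds_unique (entry_tendsto hu 0 0) ?_
      rw [show (fun i => u i 0 0) = fun i => u i 1 1 from funext heq]
      exact entry_tendsto hu 1 1
    refine ⟨N 1 1, N 0 1, hb, ?_⟩
    have hNe : !![N 1 1, N 0 1; 0, N 1 1] = N := by
      conv_rhs => rw [Matrix.eta_fin_two N]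
      rw [e10, eeq]
    rw [hNe, hN, conjB]
  · -- J2set
    intro s M hs hlim hM
    set B : Matrix (Fin 2) (Fin 2) ℝ := !![(1:ℝ), 1; -1, 1] with hB
    set u : ℕ → Matrix (Fin 2) (Fin 2) ℝ := fun i => B * s i * B⁻¹ with husdef
    set N : Matrix (Fin 2) (Fin 2) ℝ := B * M * B⁻¹ with hN
    have hu : Tendsto u atTop (nhds N) := (tendsto_const_nhds.mul hlim).mul tendsto_const_nhds
    have hui : ∀ i, ∃ b c : ℝ, 0 < b ∧ u i = !![(1:ℝ)/2, c; 0, b] := fun i => by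
      obtain ⟨b, c, hb, he⟩ := hs i
      exact ⟨b, c, hb, by rw [husdef]; dsimp only; rw [he, hB, conjA]⟩
    have h10 : ∀ i, u i 1 0 = 0 := fun i => by
      obtain ⟨b, c, _, he⟩ := hui i; rw [he]; simp
    have h11 : ∀ i, 0 < u i 1 1 := fun i => by
      obtain ⟨b, c, hb, he⟩ := hui i; rw [he]; simpa using hb
    have hhalf : ∀ i, u i 0 0 = (1:ℝ)/2 := fun i => by
      obtain ⟨b, c, _, he⟩ := hui i; rw [he]; simp
    have hNdet : N.det ≠ 0 :=
      ((Matrix.isUnit_iff_isUnit_det _).mp ((hBU.mul hM).mul hBiU)).ne_zero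
    obtain ⟨e10, _, hb⟩ := tri_limit hu hNdet h10 h11
    have e00 : N 0 0 = (1:ℝ)/2 := by
      refine tendsto_nhds_unique (entry_tendsto hu 0 0) ?_
      simp [funext hhalf]
    refine ⟨N 1 1, N 0 1, hb, ?_⟩
    have hNe : !![(1:ℝ)/2, N 0 1; 0, N 1 1] = N := by
      rw [← e10, ← e00]; exact (Matrix.eta_fin_two N).symm
    rw [hNe, hN, conjB]
end
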